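/- Fix an integer L ≥ 2, an index j ∈ {1,…,L}, and positive reals p_f, p_r, τ and β_{jl} for l = 1,…,L as well as positive reals β_{il} for all i, l ∈ {1,…,L} (with β_{jl} among them). Define κ_l = 1 + p_r τ Σ_{i=1}^{L} β_{il} for each l, e(M) = Γ(M + 1/2)/Γ(M), and for each positive integer M the rate R_j(M) = log₂( 1 + [ p_f β_{jj} (p_r τ β_{jj}/κ_j) e(M)² ] / [ 1 + p_f β_{jj} (p_r τ β_{jj}/κ_j)(M − e(M)²) + Σ_{l≠j} p_f β_{jl} (p_r τ β_{jl}/κ_l) M + Σ_{l=1}^{L} p_f β_{jl} (1 + p_r τ Σ_{i≠j} β_{il})/κ_l ] ). Then as M → ∞, R_j(M) converges to log₂( 1 + ( β_{jj}² / κ_j ) / ( Σ_{l≠j} β_{jl}² / κ_l ) ). -/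

import Mathlib

/-!
Log-convexity of `Γ`, used at the midpoints of `x, x + 1` and of `x + 1/2, x + 3/2`, gives
Gautschi-type bounds `x² / (x + 1/2) ≤ e(x)² ≤ x`, so `e(M)² / M → 1`. After dividing numerator
and denominator of the SINR by `M`, the term `M − e(M)²` and the constants vanish, the SINR tends to
the ratio of the coefficients of `M`, and the common factor `p_f p_r τ` cancels.
-/

open Filter Finset Topology Real

theorem Real.Gamma_midpoint_sq_le {s t : ℝ} (hs : 0 < s) (ht : 0 < t) :
    Gamma ((s + t) / 2) ^ 2 ≤ Gamma s * Gamma t := by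
  have h := Gamma_mul_add_mul_le_rpow_Gamma_mul_rpow_Gamma hs ht
    (one_half_pos : (0 : ℝ) < 1 / 2) one_half_pos (add_halves 1)
  rw [← mul_rpow (Gamma_pos_of_pos hs).le (Gamma_pos_of_pos ht).le, ← sqrt_eq_rpow,
    show 1 / 2 * s + 1 / 2 * t = (s + t) / 2 by ring] at h
  calc Gamma ((s + t) / 2) ^ 2 ≤ √(Gamma s * Gamma t) ^ 2 :=
        pow_le_pow_left₀ (Gamma_pos_of_pos (by positivity)).le h 2
    _ = Gamma s * Gamma t := sq_sqrt (mul_pos (Gamma_pos_of_pos hs) (Gamma_pos_of_pos ht)).le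

theorem Real.Gamma_add_half_sq_le {x : ℝ} (hx : 0 < x) :
    Gamma (x + 1 / 2) ^ 2 ≤ x * Gamma x ^ 2 := by
  have h := Gamma_midpoint_sq_le hx (by linarith : 0 < x + 1)
  rw [Gamma_add_one hx.ne', show (x + (x + 1)) / 2 = x + 1 / 2 by ring] at h
  linarith

theorem Real.sq_mul_Gamma_sq_le_mul_Gamma_add_half_sq {x : ℝ} (hx : 0 < x) :
    x ^ 2 * Gamma x ^ 2 ≤ (x + 1 / 2) * Gamma (x + 1 / 2) ^ 2 := by
  have hx' : 0 < x + 1 / 2 := by linarith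
  have h := Gamma_midpoint_sq_le hx' (by linarith : 0 < x + 1 / 2 + 1)
  rw [Gamma_add_one hx'.ne', show (x + 1 / 2 + (x + 1 / 2 + 1)) / 2 = x + 1 by ring,
    Gamma_add_one hx.ne'] at h
  linarith

theorem Real.tendsto_Gamma_add_half_div_Gamma_sq_div :
    Tendsto (fun x => (Gamma (x + 1 / 2) / Gamma x) ^ 2 / x) atTop (𝓝 1) := by
  have hlower : Tendsto (fun x : ℝ => 1 - 1 / 2 * x⁻¹) atTop (𝓝 1) := by
    simpa using (tendsto_inv_atTop_zero.const_mul (1 / 2 : ℝ)).const_sub 1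
  refine tendsto_of_tendsto_of_tendsto_of_le_of_le' hlower tendsto_const_nhds ?_ ?_
  all_goals filter_upwards [eventually_gt_atTop 0] with x hx
  · have hΓ := Gamma_pos_of_pos hx
    have h := sq_mul_Gamma_sq_le_mul_Gamma_add_half_sq hx
    rw [div_pow, div_div, le_div_iff₀ (by positivity),
      show (1 - 1 / 2 * x⁻¹) * (Gamma x ^ 2 * x) = (x - 1 / 2) * Gamma x ^ 2 by field_simp]
    refine le_of_mul_le_mul_left ?_ (by linarith : 0 < x + 1 / 2)
    nlinarith [sq_nonneg (Gamma x)]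
  · have hΓ := Gamma_pos_of_pos hx
    rw [div_pow, div_div, div_le_one (by positivity)]
    linarith [Gamma_add_half_sq_le hx]

theorem tendsto_mul_div_one_add_mul_sub_add_mul_add {α : Type*} {l : Filter α} {m v : α → ℝ}
    (hm : Tendsto m l atTop) (hv : Tendsto (fun a => v a / m a) l (𝓝 1))
    (A B C : ℝ) (hB : B ≠ 0) :
    Tendsto (fun a => A * v a / (1 + A * (m a - v a) + B * m a + C)) l (𝓝 (A / B)) := by
  have hm_inv : Tendsto (fun a => (m a)⁻¹) l (𝓝 0) := hm.inv_tendsto_atTop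
  have hnum : Tendsto (fun a => A * (v a / m a)) l (𝓝 A) := by
    simpa using hv.const_mul A
  have hden : Tendsto (fun a => (1 + C) * (m a)⁻¹ + A * (1 - v a / m a) + B) l (𝓝 B) := by
    simpa using ((hm_inv.const_mul (1 + C)).add ((hv.const_sub 1).const_mul A)).add_const B
  refine (hnum.div hden hB).congr' ?_
  filter_upwards [hm.eventually_gt_atTop 0] with a ha
  rw [Pi.div_apply]
  field_simp
  ring

/-- Theorem 1 of the paper (limiting expression): with one user per cell, a common
training sequence and zero-forcing precoding, the closed-form achievable rate
`R_j(M)` converges, as the number of antennas `M → ∞`, to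
`log₂(1 + (β_jj²/κ_j) / (Σ_{l≠j} β_jl²/κ_l))`. -/
theorem achievable_rate_saturates (L : ℕ) (hL : 2 ≤ L) (j : Fin L)
    (pf pr τ : ℝ) (hpf : 0 < pf) (hpr : 0 < pr) (hτ : 0 < τ)
    (β : Fin L → Fin L → ℝ) (hβ : ∀ i l, 0 < β i l)
    (κ : Fin L → ℝ) (hκ : ∀ l, κ l = 1 + pr * τ * ∑ i, β i l)
    (e : ℕ → ℝ) (he : ∀ M : ℕ, e M = Real.Gamma ((M : ℝ) + 1 / 2) / Real.Gamma (M : ℝ))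
    (R : ℕ → ℝ)
    (hR : ∀ M : ℕ, R M =
      Real.logb 2 (1 +
        (pf * β j j * (pr * τ * β j j / κ j) * (e M) ^ 2) /
          (1 + pf * β j j * (pr * τ * β j j / κ j) * ((M : ℝ) - (e M) ^ 2) +
            (∑ l ∈ univ.erase j, pf * β j l * (pr * τ * β j l / κ l) * (M : ℝ)) +
            ∑ l, pf * β j l * (1 + pr * τ * ∑ i ∈ univ.erase j, β i l) / κ l))) :
    Tendsto R atTop
      (nhds (Real.logb 2 (1 +
        (β j j ^ 2 / κ j) / (∑ l ∈ univ.erase j, β j l ^ 2 / κ l)))) := by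
  have hκ_pos (l : Fin L) : 0 < κ l := by
    rw [hκ]
    have := sum_pos (fun i _ => hβ i l) ⟨j, mem_univ j⟩
    positivity
  have h_others : (univ.erase j).Nonempty := by
    rw [← card_pos, card_erase_of_mem (mem_univ j), card_univ, Fintype.card_fin]
    omega
  have h_interf : 0 < ∑ l ∈ univ.erase j, β j l ^ 2 / κ l :=
    sum_pos (fun l _ => by have := hβ j l; have := hκ_pos l; positivity) h_others
  set c := pf * pr * τ
  have h_signal : pf * β j j * (pr * τ * β j j / κ j) = c * (β j j ^ 2 / κ j) := by ring
  have h_leak (M : ℕ) : ∑ l ∈ univ.erase j, pf * β j l * (pr * τ * β j l / κ l) * (M : ℝ) =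
      c * (∑ l ∈ univ.erase j, β j l ^ 2 / κ l) * M := by
    rw [mul_sum, sum_mul]
    exact sum_congr rfl fun l _ => by ring
  have h_e : Tendsto (fun M : ℕ => e M ^ 2 / M) atTop (𝓝 1) := by
    simpa only [he, Function.comp_def] using
      tendsto_Gamma_add_half_div_Gamma_sq_div.comp tendsto_natCast_atTop_atTop
  have h_sinr := tendsto_mul_div_one_add_mul_sub_add_mul_add tendsto_natCast_atTop_atTop h_e
    (c * (β j j ^ 2 / κ j)) (c * ∑ l ∈ univ.erase j, β j l ^ 2 / κ l)
    (∑ l, pf * β j l * (1 + pr * τ * ∑ i ∈ univ.erase j, β i l) / κ l)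
    (by positivity)
  rw [mul_div_mul_left _ _ (by positivity : c ≠ 0)] at h_sinr
  have h_limit_pos : 0 < 1 + β j j ^ 2 / κ j / ∑ l ∈ univ.erase j, β j l ^ 2 / κ l := by
    have := hβ j j; have := hκ_pos j; positivity
  have h_lim := (continuousAt_logb (b := 2) h_limit_pos.ne').tendsto.comp (h_sinr.const_add 1)
  refine h_lim.congr fun M => ?_
  simp only [Function.comp_apply, hR, h_signal, h_leak]
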